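/- Let a : ℕ → ℝ be a bounded sequence whose Birkhoff averages B_n diverge. If liminf B_n = liminf a_n and limsup B_n = limsup a_n, then for every k ≥ 0 the Hölder means satisfy liminf_n H^{(k)}_n = liminf a_n and limsup_n H^{(k)}_n = limsup a_n; in particular ⋂_{k≥0} [α_k, β_k] = [liminf a_n, limsup a_n] is a nondegenerate interval (type B2). -/

import Mathlib

open Filter Topology

/-- Birkhoff averages: `birk a n = (1/n) * ∑_{i=0}^{n-1} a i` (junk value `0` at `n = 0`). -/
noncomputable def birk (a : ℕ → ℝ) (n : ℕ) : ℝ := (∑ i ∈ Finset.range n, a i) / n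

/-- Iterated Hölder means of a sequence `b` (indexed from 1):
`holderMeans b 0 n = b n` and `holderMeans b (k+1) n = (1/n) * ∑_{i=1}^n holderMeans b k i`. -/
noncomputable def holderMeans (b : ℕ → ℝ) : ℕ → ℕ → ℝ
  | 0, n => b n
  | k+1, n => (∑ i ∈ Finset.Icc 1 n, holderMeans b k i) / n

/-!
Write `β = limsup a`. The Hölder means satisfy `H^{(k+1)}_n = B_n(H^{(k)}_{· + 1})`, so every
`H^{(k)}` is the Birkhoff average of a bounded sequence `b` with `limsup b = β` (namely `a`, or
`H^{(k-1)}` shifted by one). Averaging never raises the limsup. Conversely, if `b ≤ β + ε²`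
eventually and `B_N(b) ≥ β - ε²`, then `n B_n(b) = N B_N(b) - ∑_{n ≤ i < N} b_i` keeps
`B_n(b) ≥ β - 2ε` for all `n ∈ [εN, N]`, so the average of `B(b)` up to `N` is `≥ β - O(ε)`.
Hence `limsup H^{(k)} = β` for all `k`, and the liminf statement is the same one for `-a`.
Finally `liminf a < limsup a`, since otherwise `B_n` would converge.
-/

section Bounds

variable {u : ℕ → ℝ} {C : ℝ}

lemma isBoundedUnder_le_of_abs_le (hu : ∀ n, |u n| ≤ C) : IsBoundedUnder (· ≤ ·) atTop u :=
  isBoundedUnder_of ⟨C, fun n => (abs_le.1 (hu n)).2⟩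

lemma isBoundedUnder_ge_of_abs_le (hu : ∀ n, |u n| ≤ C) : IsBoundedUnder (· ≥ ·) atTop u :=
  isBoundedUnder_of ⟨-C, fun n => (abs_le.1 (hu n)).1⟩

end Bounds

/-- No boundedness is needed: `sInf s = -sSup (-s)` holds on `ℝ` for every set, junk values
included. -/
lemma Real.limsup_neg (u : ℕ → ℝ) : limsup (-u) atTop = -liminf u atTop := by
  rw [limsup_eq, liminf_eq, Real.sInf_def]
  congr 2
  ext x
  simp only [Set.mem_neg, Set.mem_ofPred_eq, Pi.neg_apply, neg_le_neg_iff]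

lemma sum_range_le_of_le_of_le {u : ℕ → ℝ} {A B : ℝ} {m N : ℕ} (hmN : m ≤ N)
    (hA : ∀ i ∈ Finset.range m, u i ≤ A) (hB : ∀ i ∈ Finset.Ico m N, u i ≤ B) :
    ∑ i ∈ Finset.range N, u i ≤ m * A + (N - m) * B := by
  rw [← Finset.sum_range_add_sum_Ico u hmN]
  have hA' := Finset.sum_le_card_nsmul _ _ _ hA
  have hB' := Finset.sum_le_card_nsmul _ _ _ hB
  rw [Finset.card_range, nsmul_eq_mul] at hA'
  rw [Nat.card_Ico, nsmul_eq_mul, Nat.cast_sub hmN] at hB'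
  linarith

lemma le_sum_range_of_le_of_le {u : ℕ → ℝ} {A B : ℝ} {m N : ℕ} (hmN : m ≤ N)
    (hA : ∀ i ∈ Finset.range m, A ≤ u i) (hB : ∀ i ∈ Finset.Ico m N, B ≤ u i) :
    m * A + (N - m) * B ≤ ∑ i ∈ Finset.range N, u i := by
  have := sum_range_le_of_le_of_le (u := -u) hmN (fun i hi => neg_le_neg (hA i hi))
    (fun i hi => neg_le_neg (hB i hi))
  simp only [Pi.neg_apply, Finset.sum_neg_distrib] at this
  linarith

section Birkhoff

variable {u b : ℕ → ℝ} {C : ℝ}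

lemma mul_birk (u : ℕ → ℝ) (n : ℕ) : n * birk u n = ∑ i ∈ Finset.range n, u i := by
  rcases n.eq_zero_or_pos with rfl | hn
  · simp
  · exact mul_div_cancel₀ _ (by positivity)

lemma birk_neg (u : ℕ → ℝ) : birk (-u) = -birk u := by
  funext n
  simp [birk, neg_div]

lemma abs_birk_le (hu : ∀ n, |u n| ≤ C) (n : ℕ) : |birk u n| ≤ C := by
  rcases n.eq_zero_or_pos with rfl | hn
  · simpa [birk] using (abs_nonneg _).trans (hu 0)
  · have hn' : (0 : ℝ) < n := by exact_mod_cast hn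
    rw [abs_le, birk, le_div_iff₀ hn', div_le_iff₀ hn']
    constructor
    · simpa [mul_comm] using le_sum_range_of_le_of_le (le_refl n)
        (fun i _ => (abs_le.1 (hu i)).1) (B := 0) (by simp)
    · simpa [mul_comm] using sum_range_le_of_le_of_le (le_refl n)
        (fun i _ => (abs_le.1 (hu i)).2) (B := 0) (by simp)

theorem limsup_birk_le (hu : ∀ n, |u n| ≤ C) : limsup (birk u) atTop ≤ limsup u atTop := by
  set β := limsup u atTop
  have hC : 0 ≤ C := (abs_nonneg _).trans (hu 0)
  refine le_of_forall_pos_le_add fun ε hε => ?_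
  obtain ⟨M, hM⟩ := eventually_atTop.1 <|
    eventually_lt_of_limsup_lt (lt_add_of_pos_right β (half_pos hε)) (isBoundedUnder_le_of_abs_le hu)
  refine limsup_le_of_le (isBoundedUnder_ge_of_abs_le (abs_birk_le hu)).isCoboundedUnder_le ?_
  filter_upwards [eventually_ge_atTop M, (tendsto_natCast_atTop_atTop (R := ℝ)).eventually_ge_atTop
    (2 * M * (C + |β|) / ε + 1)] with N hMN hN
  have hN0 : (0 : ℝ) < N := by
    have : 0 ≤ 2 * M * (C + |β|) / ε := by positivity
    linarith
  have hsum := sum_range_le_of_le_of_le hMN (fun i _ => (abs_le.1 (hu i)).2)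
    (fun i hi => (hM i (Finset.mem_Ico.1 hi).1).le)
  have hNε : 2 * M * (C + |β|) ≤ N * ε := by
    rw [← div_le_iff₀ hε]; linarith
  rw [birk, div_le_iff₀ hN0]
  have hM0 : (0 : ℝ) ≤ M := M.cast_nonneg
  nlinarith [neg_abs_le β, mul_nonneg hM0 hε.le]

lemma mul_sub_birk_le {β δ : ℝ} {n N : ℕ} (hnN : n ≤ N)
    (hb : ∀ i ∈ Finset.Ico n N, b i ≤ β + δ) (hN : β - δ ≤ birk b N) :
    n * (β - birk b n) ≤ (2 * N - n) * δ := by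
  have hsplit := Finset.sum_range_add_sum_Ico b hnN
  have hIco := Finset.sum_le_card_nsmul _ _ _ hb
  rw [Nat.card_Ico, nsmul_eq_mul, Nat.cast_sub hnN] at hIco
  rw [← mul_birk, ← mul_birk] at hsplit
  nlinarith [mul_le_mul_of_nonneg_left hN N.cast_nonneg]

end Birkhoff

/-- `holderMeans` is indexed from `1`, so the Hölder recursion averages the shifted sequence. -/
noncomputable def birkShift (b : ℕ → ℝ) (n : ℕ) : ℝ := birk b (n + 1)

section BirkShift

variable {b : ℕ → ℝ} {C : ℝ}

lemma abs_birkShift_le (hb : ∀ n, |b n| ≤ C) (n : ℕ) : |birkShift b n| ≤ C :=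
  abs_birk_le hb (n + 1)

lemma limsup_birkShift (b : ℕ → ℝ) : limsup (birkShift b) atTop = limsup (birk b) atTop :=
  limsup_nat_add (birk b) 1

lemma commute_neg_birkShift : Function.Commute (Neg.neg : (ℕ → ℝ) → ℕ → ℝ) birkShift := by
  intro b
  funext n
  simp [birkShift, birk_neg]

theorem limsup_birk_le_limsup_birk_birkShift (hb : ∀ n, |b n| ≤ C)
    (h : limsup b atTop ≤ limsup (birk b) atTop) :
    limsup (birk b) atTop ≤ limsup (birk (birkShift b)) atTop := by
  set β := limsup (birk b) atTop
  set K := 2 * C + 2 * |β| + 2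
  have hC : 0 ≤ C := (abs_nonneg _).trans (hb 0)
  have hc : ∀ n, |birk b n| ≤ C := abs_birk_le hb
  suffices key : ∀ ε ∈ Set.Ioc (0 : ℝ) (1 / 2), β - K * ε ≤ limsup (birk (birkShift b)) atTop by
    have ht : Tendsto (fun ε => β - K * ε) (𝓝[>] 0) (𝓝 β) := by
      simpa using ((tendsto_id.const_mul K).const_sub β).mono_left
        (nhdsWithin_le_nhds (a := (0 : ℝ)))
    exact le_of_tendsto ht (eventually_of_mem (Ioc_mem_nhdsGT (by norm_num)) key)
  rintro ε ⟨hε, hε2⟩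
  obtain ⟨M, hM⟩ := eventually_atTop.1 <| eventually_lt_of_limsup_lt
    (show limsup b atTop < β + ε ^ 2 by nlinarith) (isBoundedUnder_le_of_abs_le hb)
  have hfreq : ∃ᶠ N in atTop, β - ε ^ 2 < birk b N :=
    frequently_lt_of_lt_limsup (isBoundedUnder_ge_of_abs_le hc).isCoboundedUnder_le (by nlinarith)
  refine le_limsup_of_frequently_le ?_
    (isBoundedUnder_le_of_abs_le (abs_birk_le (abs_birkShift_le hb)))
  refine (hfreq.and_eventually ((tendsto_natCast_atTop_atTop (R := ℝ)).eventually_ge_atTop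
    (2 * (M + 1) / ε))).mono ?_
  rintro N ⟨hcN, hNlarge⟩
  have hN : 2 * (M + 1) ≤ ε * N := by rwa [div_le_iff₀' hε] at hNlarge
  have hN0 : (0 : ℝ) < N := by nlinarith [(M.cast_nonneg : (0 : ℝ) ≤ M)]
  set m := M + ⌈ε * N⌉₊
  have hm_ge : ε * N ≤ m := by
    push_cast [m]
    linarith [Nat.le_ceil (ε * N), (M.cast_nonneg : (0 : ℝ) ≤ M)]
  have hm_le : (m : ℝ) ≤ 2 * ε * N := by
    push_cast [m]
    linarith [Nat.ceil_lt_add_one (by positivity : 0 ≤ ε * N)]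
  have hmN : m ≤ N := by exact_mod_cast (hm_le.trans (by nlinarith) : (m : ℝ) ≤ N)
  have hlow : ∀ n, m ≤ n → n ≤ N → β - 2 * ε ≤ birk b n := by
    intro n hmn hnN
    have hn : ε * N ≤ n := hm_ge.trans (by exact_mod_cast hmn)
    have hn0 : (0 : ℝ) < n := lt_of_lt_of_le (by positivity) hn
    have := mul_sub_birk_le hnN (fun i hi => (hM i (by grind)).le) hcN.le
    nlinarith
  have hsum := le_sum_range_of_le_of_le (u := birkShift b) hmN
    (fun i _ => (abs_le.1 (abs_birkShift_le hb i)).1)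
    (fun i hi => hlow (i + 1) (by grind) (by grind))
  rw [birk, le_div_iff₀ hN0]
  have hm0 : (0 : ℝ) ≤ m := m.cast_nonneg
  nlinarith [mul_le_mul_of_nonneg_right hm_le (by positivity : 0 ≤ C + |β|),
    mul_nonneg hm0 (sub_nonneg.2 (le_abs_self β)), mul_nonneg hm0 hε.le]

end BirkShift

section Iterate

variable {a : ℕ → ℝ} {C : ℝ}

lemma abs_birkShift_iterate_le (ha : ∀ n, |a n| ≤ C) (k n : ℕ) : |birkShift^[k] a n| ≤ C := by
  induction k generalizing n with
  | zero => exact ha n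
  | succ k ih => rw [Function.iterate_succ_apply']; exact abs_birkShift_le ih n

theorem limsup_birk_birkShift_iterate (ha : ∀ n, |a n| ≤ C)
    (h : limsup (birk a) atTop = limsup a atTop) (k : ℕ) :
    limsup (birk (birkShift^[k] a)) atTop = limsup a atTop := by
  suffices ∀ k, limsup (birkShift^[k] a) atTop = limsup a atTop ∧
      limsup (birk (birkShift^[k] a)) atTop = limsup a atTop from (this k).2
  intro k
  induction k with
  | zero => exact ⟨rfl, h⟩
  | succ k ih =>
    obtain ⟨hb, hcb⟩ := ih
    have hbd := abs_birkShift_iterate_le ha k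
    have hshift : limsup (birkShift (birkShift^[k] a)) atTop = limsup a atTop := by
      rw [limsup_birkShift, hcb]
    rw [Function.iterate_succ_apply']
    refine ⟨hshift, le_antisymm ?_ ?_⟩
    · exact hshift ▸ limsup_birk_le (abs_birkShift_le hbd)
    · exact hcb ▸ limsup_birk_le_limsup_birk_birkShift hbd (by rw [hb, hcb])

theorem liminf_birk_birkShift_iterate (ha : ∀ n, |a n| ≤ C)
    (h : liminf (birk a) atTop = liminf a atTop) (k : ℕ) :
    liminf (birk (birkShift^[k] a)) atTop = liminf a atTop := by
  have hneg : ∀ n, |(-a) n| ≤ C := fun n => by simpa using ha n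
  have := limsup_birk_birkShift_iterate hneg (by rw [birk_neg, Real.limsup_neg,
    Real.limsup_neg, h]) k
  rwa [← commute_neg_birkShift.iterate_right k a, birk_neg, Real.limsup_neg, Real.limsup_neg,
    neg_inj] at this

end Iterate

lemma holderMeans_succ (b : ℕ → ℝ) (k : ℕ) :
    holderMeans b (k + 1) = birk fun n => holderMeans b k (n + 1) := by
  funext n
  rw [holderMeans, birk, Finset.range_eq_Ico, Finset.sum_Ico_add' (fun i => holderMeans b k i)]
  rfl

lemma holderMeans_birk (a : ℕ → ℝ) (k : ℕ) : holderMeans (birk a) k = birk (birkShift^[k] a) := by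
  induction k with
  | zero => rfl
  | succ k ih => rw [holderMeans_succ, ih, Function.iterate_succ_apply']; rfl

/-- **Proposition 4.**  Let `a` be bounded with divergent Birkhoff averages `B_n`.
If `liminf B = liminf a` and `limsup B = limsup a`, then for every `k` the Hölder
means satisfy `liminf H^{(k)} = liminf a` and `limsup H^{(k)} = limsup a`; in
particular `⋂_k [α_k, β_k] = [liminf a, limsup a]` is a nondegenerate interval
(type B2). -/
theorem type_B2_of_extremal_cluster_interval (a : ℕ → ℝ)
    (hbdd : ∃ C : ℝ, ∀ n, |a n| ≤ C)
    (hdiv : ¬ ∃ L : ℝ, Tendsto (birk a) atTop (𝓝 L))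
    (hinf : liminf (birk a) atTop = liminf a atTop)
    (hsup : limsup (birk a) atTop = limsup a atTop) :
    (∀ k : ℕ, liminf (fun n : ℕ => holderMeans (birk a) k n) atTop = liminf a atTop ∧
      limsup (fun n : ℕ => holderMeans (birk a) k n) atTop = limsup a atTop) ∧
    (⋂ k : ℕ, Set.Icc (liminf (fun n : ℕ => holderMeans (birk a) k n) atTop)
        (limsup (fun n : ℕ => holderMeans (birk a) k n) atTop)) =
      Set.Icc (liminf a atTop) (limsup a atTop) ∧
    liminf a atTop < limsup a atTop := by
  obtain ⟨C, ha⟩ := hbdd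
  have hk : ∀ k : ℕ, liminf (fun n : ℕ => holderMeans (birk a) k n) atTop = liminf a atTop ∧
      limsup (fun n : ℕ => holderMeans (birk a) k n) atTop = limsup a atTop := fun k => by
    simp only [holderMeans_birk]
    exact ⟨liminf_birk_birkShift_iterate ha hinf k, limsup_birk_birkShift_iterate ha hsup k⟩
  refine ⟨hk, by simp only [hk, Set.iInter_const], lt_of_not_ge fun hle => hdiv ?_⟩
  have hB := abs_birk_le ha
  refine ⟨_, tendsto_of_liminf_eq_limsup (le_antisymm ?_ (hsup ▸ hinf ▸ hle)) rfl
    (isBoundedUnder_le_of_abs_le hB) (isBoundedUnder_ge_of_abs_le hB)⟩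
  exact liminf_le_limsup (isBoundedUnder_le_of_abs_le hB) (isBoundedUnder_ge_of_abs_le hB)
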